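/- Let H, (e_k), (λ_k), E_A, R_A and (f_k), (μ_k), E_B, R_B be as in the context. Then for every x, y ∈ H, τ > 0 and n ≥ 1, ‖R_B(τ)^n y − R_A(τ)^n x‖ ≤ sup_{t ≥ 0} ‖E_B(t)y − E_A(t)x‖. -/

import Mathlib

/-!
Backward Euler is subordinated to the semigroup: for `λ ≥ 0`,
`(1 + τλ)⁻ⁿ = ∫ e^{-tλ} dΓ(t)` where `Γ` is the Gamma distribution of shape `n` and rate `1/τ`.
Comparing coefficients in the Hilbert basis gives `R(τ)ⁿ v = ∫ E(t) v dΓ(t)` as a Bochner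
integral, so `R_B(τ)ⁿ y - R_A(τ)ⁿ x` is a probability average of `E_B(t) y - E_A(t) x` over
`t ≥ 0`, and its norm is at most the supremum of their norms.
-/

open MeasureTheory ProbabilityTheory Set
open scoped RealInnerProductSpace

lemma integral_gammaMeasure_eq_integral_Ioi {E : Type*} [NormedAddCommGroup E] [NormedSpace ℝ E]
    {a r : ℝ} (ha : 0 < a) (hr : 0 < r) (g : ℝ → E) :
    ∫ t, g t ∂gammaMeasure a r = ∫ t in Ioi 0, gammaPDFReal a r t • g t := by
  have hmeas : Measurable (gammaPDF a r) := (measurable_gammaPDFReal a r).ennreal_ofReal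
  rw [gammaMeasure, integral_withDensity_eq_integral_toReal_smul hmeas
      (ae_of_all _ fun _ => ENNReal.ofReal_lt_top), ← integral_Ici_eq_integral_Ioi]
  simp only [gammaPDF, ENNReal.toReal_ofReal (gammaPDFReal_nonneg ha hr _)]
  refine (setIntegral_eq_integral_of_forall_compl_eq_zero fun t (ht : ¬ 0 ≤ t) => ?_).symm
  simp [gammaPDFReal, ht]

lemma ae_nonneg_gammaMeasure (a r : ℝ) : ∀ᵐ t ∂gammaMeasure a r, 0 ≤ t := by
  simp only [ae_iff, not_le]
  rw [show {t : ℝ | t < 0} = Iio 0 from rfl, gammaMeasure, withDensity_apply _ measurableSet_Iio]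
  exact lintegral_gammaPDF_of_nonpos le_rfl

lemma integral_exp_neg_mul_gammaMeasure {a r c : ℝ} (ha : 0 < a) (hr : 0 < r) (hc : 0 < r + c) :
    ∫ t, Real.exp (-t * c) ∂gammaMeasure a r = (r / (r + c)) ^ a := by
  rw [integral_gammaMeasure_eq_integral_Ioi ha hr]
  calc ∫ t in Ioi 0, gammaPDFReal a r t • Real.exp (-t * c)
      = ∫ t in Ioi 0, r ^ a / Real.Gamma a * (t ^ (a - 1) * Real.exp (-((r + c) * t))) := by
        refine setIntegral_congr_fun measurableSet_Ioi fun t (ht : 0 < t) => ?_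
        rw [smul_eq_mul, gammaPDFReal, if_pos ht.le, mul_assoc, mul_assoc, ← Real.exp_add]
        ring_nf
    _ = (r / (r + c)) ^ a := by
        rw [integral_const_mul, Real.integral_rpow_mul_exp_neg_mul_Ioi ha hc,
          Real.div_rpow hr.le hc.le, one_div, Real.inv_rpow hc.le]
        have := (Real.Gamma_pos_of_pos ha).ne'
        field_simp

lemma abs_exp_neg_mul_le_one {t l : ℝ} (ht : 0 ≤ t) (hl : 0 ≤ l) : |Real.exp (-t * l)| ≤ 1 := by
  rw [abs_of_pos (Real.exp_pos _), Real.exp_le_one_iff]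
  exact mul_nonpos_of_nonpos_of_nonneg (neg_nonpos.2 ht) hl

lemma norm_integral_le_sSup_image {α E : Type*} [MeasurableSpace α] [NormedAddCommGroup E]
    [NormedSpace ℝ E] {μ : Measure α} [IsProbabilityMeasure μ] {g : α → E} {s : Set α}
    (hs : ∀ᵐ a ∂μ, a ∈ s) (hbdd : BddAbove ((fun a => ‖g a‖) '' s)) :
    ‖∫ a, g a ∂μ‖ ≤ sSup ((fun a => ‖g a‖) '' s) :=
  (norm_integral_le_of_norm_le_const (hs.mono fun a ha => le_csSup hbdd ⟨a, ha, rfl⟩)).trans_eq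
    (by simp)

namespace HilbertBasis

variable {ι H : Type*} [NormedAddCommGroup H] [InnerProductSpace ℝ H]
  (e : HilbertBasis ι ℝ H) {c : ι → ℝ}

noncomputable def diagonal (c : ι → ℝ) (v : H) : H := ∑' k, (c k * ⟪e k, v⟫) • e k

lemma memℓp_mul_inner (hc : ∀ k, |c k| ≤ 1) (v : H) :
    Memℓp (fun k => c k * ⟪e k, v⟫) 2 :=
  (lp.memℓp (e.repr v)).mono' fun k => by
    rw [e.repr_apply_apply, norm_mul]
    exact mul_le_of_le_one_left (norm_nonneg _) (hc k)

lemma diagonal_eq_repr_symm (hc : ∀ k, |c k| ≤ 1) (v : H) :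
    e.diagonal c v = e.repr.symm ⟨_, e.memℓp_mul_inner hc v⟩ :=
  (e.hasSum_repr_symm ⟨_, e.memℓp_mul_inner hc v⟩).tsum_eq

lemma hasSum_diagonal (hc : ∀ k, |c k| ≤ 1) (v : H) :
    HasSum (fun k => (c k * ⟪e k, v⟫) • e k) (e.diagonal c v) := by
  rw [e.diagonal_eq_repr_symm hc]
  exact e.hasSum_repr_symm _

lemma inner_diagonal (hc : ∀ k, |c k| ≤ 1) (v : H) (k : ι) :
    ⟪e k, e.diagonal c v⟫ = c k * ⟪e k, v⟫ := by
  rw [e.diagonal_eq_repr_symm hc, ← e.repr_apply_apply, LinearIsometryEquiv.apply_symm_apply]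

lemma norm_diagonal_le (hc : ∀ k, |c k| ≤ 1) (v : H) : ‖e.diagonal c v‖ ≤ ‖v‖ := by
  rw [e.diagonal_eq_repr_symm hc, LinearIsometryEquiv.norm_map, ← e.repr.norm_map v]
  refine lp.norm_mono two_ne_zero fun k => ?_
  change ‖c k * ⟪e k, v⟫‖ ≤ ‖e.repr v k‖
  rw [e.repr_apply_apply, norm_mul]
  exact mul_le_of_le_one_left (norm_nonneg _) (hc k)

lemma diagonal_eq_of_inner {v w : H} (h : ∀ k, ⟪e k, w⟫ = c k * ⟪e k, v⟫) :
    e.diagonal c v = w := by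
  rw [← (e.hasSum_repr w).tsum_eq, diagonal]
  simp only [e.repr_apply_apply, h]

lemma aestronglyMeasurable_diagonal [Countable ι] {α : Type*} [MeasurableSpace α] {μ : Measure α}
    {c : α → ι → ℝ} (hmeas : ∀ k, Measurable fun a => c a k)
    (hc : ∀ᵐ a ∂μ, ∀ k, |c a k| ≤ 1) (v : H) :
    AEStronglyMeasurable (fun a => e.diagonal (c a) v) μ :=
  aestronglyMeasurable_of_tendsto_ae Filter.atTop
    (fun s => s.aestronglyMeasurable_fun_sum fun k _ =>
      ((hmeas k).mul_const _).aestronglyMeasurable.smul_const (e k))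
    (hc.mono fun _ ha => e.hasSum_diagonal ha v)

lemma norm_diagonal_exp_le {t : ℝ} (ht : 0 ≤ t) {lam : ι → ℝ} (hlam : ∀ k, 0 ≤ lam k) (v : H) :
    ‖e.diagonal (fun k => Real.exp (-t * lam k)) v‖ ≤ ‖v‖ :=
  e.norm_diagonal_le (fun k => abs_exp_neg_mul_le_one ht (hlam k)) v

lemma integrable_diagonal_exp [Countable ι] {μ : Measure ℝ} [IsFiniteMeasure μ]
    (hμ : ∀ᵐ t ∂μ, 0 ≤ t) {lam : ι → ℝ} (hlam : ∀ k, 0 ≤ lam k) (v : H) :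
    Integrable (fun t => e.diagonal (fun k => Real.exp (-t * lam k)) v) μ := by
  have hc : ∀ᵐ t ∂μ, ∀ k, |Real.exp (-t * lam k)| ≤ 1 :=
    hμ.mono fun t ht k => abs_exp_neg_mul_le_one ht (hlam k)
  exact .of_bound (e.aestronglyMeasurable_diagonal (fun k => by fun_prop) hc v) ‖v‖
    (hμ.mono fun t ht => e.norm_diagonal_exp_le ht hlam v)

theorem diagonal_inv_pow_eq_integral_gammaMeasure [Countable ι] [CompleteSpace H]
    {lam : ι → ℝ} (hlam : ∀ k, 0 ≤ lam k) {τ : ℝ} (hτ : 0 < τ) {n : ℕ} (hn : 0 < n) (v : H) :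
    e.diagonal (fun k => ((1 + τ * lam k) ^ n)⁻¹) v =
      ∫ t, e.diagonal (fun k => Real.exp (-t * lam k)) v ∂gammaMeasure n τ⁻¹ := by
  have := isProbabilityMeasure_gammaMeasure (Nat.cast_pos.2 hn) (inv_pos.2 hτ)
  refine e.diagonal_eq_of_inner fun k => ?_
  rw [← integral_inner (e.integrable_diagonal_exp (ae_nonneg_gammaMeasure _ _) hlam v)]
  calc ∫ t, ⟪e k, e.diagonal (fun k => Real.exp (-t * lam k)) v⟫ ∂gammaMeasure n τ⁻¹
      = ∫ t, Real.exp (-t * lam k) * ⟪e k, v⟫ ∂gammaMeasure n τ⁻¹ :=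
        integral_congr_ae <| (ae_nonneg_gammaMeasure _ _).mono fun t ht =>
          e.inner_diagonal (fun j => abs_exp_neg_mul_le_one ht (hlam j)) v k
    _ = ((1 + τ * lam k) ^ n)⁻¹ * ⟪e k, v⟫ := by
        rw [integral_mul_const, integral_exp_neg_mul_gammaMeasure (Nat.cast_pos.2 hn)
          (inv_pos.2 hτ) (by have := hlam k; positivity), Real.rpow_natCast, ← inv_pow]
        congr 2
        field_simp

end HilbertBasis

theorem euler_lemma_sup_general {H : Type*} [NormedAddCommGroup H] [InnerProductSpace ℝ H]
    [CompleteSpace H]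
    (e f : HilbertBasis ℕ ℝ H) (lam mu : ℕ → ℝ)
    (hlam_pos : ∀ k, 0 < lam k)
    (hmu_pos : ∀ k, 0 < mu k)
    (EA EB : ℝ → H → H) (RA RB : ℝ → ℕ → H → H)
    (hEA : ∀ t v, EA t v = ∑' k, (Real.exp (-t * lam k) * ⟪e k, v⟫) • e k)
    (hEB : ∀ t v, EB t v = ∑' k, (Real.exp (-t * mu k) * ⟪f k, v⟫) • f k)
    (hRA : ∀ τ n v, RA τ n v = ∑' k, (((1 + τ * lam k) ^ n)⁻¹ * ⟪e k, v⟫) • e k)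
    (hRB : ∀ τ n v, RB τ n v = ∑' k, (((1 + τ * mu k) ^ n)⁻¹ * ⟪f k, v⟫) • f k)
    (x y : H) (τ : ℝ) (hτ : 0 < τ) (n : ℕ) (hn : 1 ≤ n) :
    ‖RB τ n y - RA τ n x‖ ≤ sSup ((fun t => ‖EB t y - EA t x‖) '' Set.Ici (0 : ℝ)) := by
  have hEA' : ∀ t v, EA t v = e.diagonal (fun k => Real.exp (-t * lam k)) v := hEA
  have hEB' : ∀ t v, EB t v = f.diagonal (fun k => Real.exp (-t * mu k)) v := hEB
  have hRA' : ∀ v, RA τ n v = e.diagonal (fun k => ((1 + τ * lam k) ^ n)⁻¹) v := hRA τ n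
  have hRB' : ∀ v, RB τ n v = f.diagonal (fun k => ((1 + τ * mu k) ^ n)⁻¹) v := hRB τ n
  have hlam : ∀ k, 0 ≤ lam k := fun k => (hlam_pos k).le
  have hmu : ∀ k, 0 ≤ mu k := fun k => (hmu_pos k).le
  have := isProbabilityMeasure_gammaMeasure (Nat.cast_pos.2 hn) (inv_pos.2 hτ)
  have hsubord : RB τ n y - RA τ n x = ∫ t, (EB t y - EA t x) ∂gammaMeasure n τ⁻¹ := by
    simp only [hEA', hEB', hRA', hRB']
    rw [f.diagonal_inv_pow_eq_integral_gammaMeasure hmu hτ hn,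
      e.diagonal_inv_pow_eq_integral_gammaMeasure hlam hτ hn, integral_sub
        (f.integrable_diagonal_exp (ae_nonneg_gammaMeasure _ _) hmu y)
        (e.integrable_diagonal_exp (ae_nonneg_gammaMeasure _ _) hlam x)]
  have hbdd : BddAbove ((fun t => ‖EB t y - EA t x‖) '' Ici 0) := by
    refine ⟨‖y‖ + ‖x‖, forall_mem_image.2 fun t (ht : 0 ≤ t) => ?_⟩
    rw [hEA', hEB']
    exact (norm_sub_le _ _).trans
      (add_le_add (f.norm_diagonal_exp_le ht hmu y) (e.norm_diagonal_exp_le ht hlam x))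
  rw [hsubord]
  exact norm_integral_le_sSup_image (ae_nonneg_gammaMeasure _ _) hbdd

/-- Lemma 3(ii) in the self-adjoint diagonal setting:
`‖R_B(τ)ⁿ y − R_A(τ)ⁿ x‖ ≤ sup_{t ≥ 0} ‖E_B(t)y − E_A(t)x‖`. -/
theorem euler_lemma_sup {H : Type*} [NormedAddCommGroup H] [InnerProductSpace ℝ H]
    [CompleteSpace H]
    (e f : HilbertBasis ℕ ℝ H) (lam mu : ℕ → ℝ)
    (hlam_pos : ∀ k, 0 < lam k) (hlam_mono : Monotone lam)
    (hlam_top : Filter.Tendsto lam Filter.atTop Filter.atTop)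
    (hmu_pos : ∀ k, 0 < mu k) (hmu_mono : Monotone mu)
    (hmu_top : Filter.Tendsto mu Filter.atTop Filter.atTop)
    (EA EB : ℝ → H → H) (RA RB : ℝ → ℕ → H → H)
    (hEA : ∀ t v, EA t v = ∑' k, (Real.exp (-t * lam k) * ⟪e k, v⟫) • e k)
    (hEB : ∀ t v, EB t v = ∑' k, (Real.exp (-t * mu k) * ⟪f k, v⟫) • f k)
    (hRA : ∀ τ n v, RA τ n v = ∑' k, (((1 + τ * lam k) ^ n)⁻¹ * ⟪e k, v⟫) • e k)
    (hRB : ∀ τ n v, RB τ n v = ∑' k, (((1 + τ * mu k) ^ n)⁻¹ * ⟪f k, v⟫) • f k)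
    (x y : H) (τ : ℝ) (hτ : 0 < τ) (n : ℕ) (hn : 1 ≤ n) :
    ‖RB τ n y - RA τ n x‖ ≤ sSup ((fun t => ‖EB t y - EA t x‖) '' Set.Ici (0 : ℝ)) :=
  euler_lemma_sup_general e f lam mu hlam_pos hmu_pos EA EB RA RB hEA hEB hRA hRB x y τ hτ n hn
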